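/- arXiv:2411.07878 — 6 statements merged into one kernel-verified Lean document; each statement's English description precedes it below -/
import Mathlib

section
/- The function t ↦ φ(t)/t², where φ(t) = e^t − 1 − t, extended at 0 by continuity to the value 1/2, is increasing on ℝ. -/
open Real

noncomputable def phiFn (t : ℝ) : ℝ := Real.exp t - 1 - t

noncomputable def phiRatio (t : ℝ) : ℝ := if t = 0 then 1/2 else phiFn t / t ^ 2

/-- g t = (t-2) e^t + t + 2 -/
noncomputable def gFn (t : ℝ) : ℝ := (t - 2) * Real.exp t + t + 2

lemma gFn_hasDeriv (t : ℝ) : HasDerivAt gFn ((t - 1) * Real.exp t + 1) t := by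
  have h1 := ((((hasDerivAt_id t).sub_const 2).mul (Real.hasDerivAt_exp t)).add
    (hasDerivAt_id t)).add_const 2
  exact h1.congr_deriv (by simp only [id]; ring)

lemma gFn'_hasDeriv (t : ℝ) :
    HasDerivAt (fun t : ℝ => (t - 1) * Real.exp t + 1) (t * Real.exp t) t := by
  have h1 : HasDerivAt (fun t : ℝ => (t - 1) * Real.exp t)
      (1 * Real.exp t + (t - 1) * Real.exp t) t :=
    (((hasDerivAt_id t).sub_const 1).mul (Real.hasDerivAt_exp t))
  exact (h1.add_const 1).congr_deriv (by ring)

lemma gFn'_pos {t : ℝ} (ht : t ≠ 0) : 0 < (t - 1) * Real.exp t + 1 := by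
  set G' : ℝ → ℝ := fun t => (t - 1) * Real.exp t + 1 with hG'
  have hcont : Continuous G' := by
    fun_prop
  have h0 : G' 0 = 0 := by simp [hG']
  rcases ht.lt_or_gt with h | h
  · -- strict anti on Iic 0
    have : StrictAntiOn G' (Set.Iic 0) := by
      apply strictAntiOn_of_deriv_neg (convex_Iic 0) hcont.continuousOn
      intro x hx
      rw [interior_Iic] at hx
      rw [(gFn'_hasDeriv x).deriv]
      exact mul_neg_of_neg_of_pos hx (Real.exp_pos x)
    have := this (Set.mem_Iic.2 h.le) (Set.mem_Iic.2 le_rfl) h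
    rw [h0] at this; exact this
  · have : StrictMonoOn G' (Set.Ici 0) := by
      apply strictMonoOn_of_deriv_pos (convex_Ici 0) hcont.continuousOn
      intro x hx
      rw [interior_Ici] at hx
      rw [(gFn'_hasDeriv x).deriv]
      exact mul_pos hx (Real.exp_pos x)
    have := this (Set.mem_Ici.2 le_rfl) (Set.mem_Ici.2 h.le) h
    rw [h0] at this; exact this

lemma gFn_pos {t : ℝ} (ht : 0 < t) : 0 < gFn t := by
  have hcont : Continuous gFn := by unfold gFn; fun_prop
  have hs : StrictMonoOn gFn (Set.Ici 0) := by
    apply strictMonoOn_of_deriv_pos (convex_Ici 0) hcont.continuousOn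
    intro x hx
    rw [interior_Ici] at hx
    rw [(gFn_hasDeriv x).deriv]
    exact gFn'_pos (ne_of_gt hx)
  have := hs (Set.mem_Ici.2 le_rfl) (Set.mem_Ici.2 ht.le) ht
  have h0 : gFn 0 = 0 := by simp [gFn]
  linarith

lemma gFn_neg {t : ℝ} (ht : t < 0) : gFn t < 0 := by
  have hcont : Continuous gFn := by unfold gFn; fun_prop
  have hs : StrictMonoOn gFn (Set.Iic 0) := by
    apply strictMonoOn_of_deriv_pos (convex_Iic 0) hcont.continuousOn
    intro x hx
    rw [interior_Iic] at hx
    rw [(gFn_hasDeriv x).deriv]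
    exact gFn'_pos (ne_of_lt hx)
  have := hs (Set.mem_Iic.2 ht.le) (Set.mem_Iic.2 le_rfl) ht
  have h0 : gFn 0 = 0 := by simp [gFn]
  linarith

lemma phiFn_nonneg (t : ℝ) : 0 ≤ phiFn t := by
  have := Real.add_one_le_exp t
  unfold phiFn; linarith

/-- half bound function h t = exp t - 1 - t - t^2/2 -/
lemma halfBound_mono : Monotone (fun t : ℝ => Real.exp t - 1 - t - t ^ 2 / 2) := by
  have hd : ∀ t : ℝ, HasDerivAt (fun t : ℝ => Real.exp t - 1 - t - t ^ 2 / 2)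
      (Real.exp t - 1 - t) t := by
    intro t
    have h1 := (((Real.hasDerivAt_exp t).sub_const 1).sub (hasDerivAt_id t))
    have h2 : HasDerivAt (fun t : ℝ => t ^ 2 / 2) t t := by
      have := (hasDerivAt_pow 2 t).div_const 2
      exact this.congr_deriv (by push_cast; ring)
    exact h1.sub h2
  apply monotone_of_deriv_nonneg
  · intro t; exact (hd t).differentiableAt
  · intro t
    rw [(hd t).deriv]
    have := phiFn_nonneg t
    unfold phiFn at this; linarith

lemma phiRatio_ge_half {t : ℝ} (ht : 0 < t) : 1/2 ≤ phiRatio t := by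
  have h := halfBound_mono (le_of_lt ht)
  simp only [Real.exp_zero] at h
  have ht2 : (0:ℝ) < t ^ 2 := by positivity
  rw [phiRatio, if_neg (ne_of_gt ht), le_div_iff₀ ht2]
  unfold phiFn; nlinarith

lemma phiRatio_le_half {t : ℝ} (ht : t < 0) : phiRatio t ≤ 1/2 := by
  have h := halfBound_mono (le_of_lt ht)
  simp only [Real.exp_zero] at h
  have ht2 : (0:ℝ) < t ^ 2 := by nlinarith
  rw [phiRatio, if_neg (ne_of_lt ht), div_le_iff₀ ht2]
  unfold phiFn; nlinarith

lemma phiRatio_hasDeriv {t : ℝ} (ht : t ≠ 0) :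
    HasDerivAt phiRatio (((Real.exp t - 1) * t ^ 2 - phiFn t * (2 * t)) / (t ^ 2) ^ 2) t := by
  have hnum : HasDerivAt phiFn (Real.exp t - 1) t :=
    ((Real.hasDerivAt_exp t).sub_const 1).sub (hasDerivAt_id t)
  have hden : HasDerivAt (fun t : ℝ => t ^ 2) (2 * t) t := by
    have := hasDerivAt_pow 2 t
    exact this.congr_deriv (by push_cast; ring)
  have hf : HasDerivAt (fun t => phiFn t / t ^ 2)
      (((Real.exp t - 1) * t ^ 2 - phiFn t * (2 * t)) / (t ^ 2) ^ 2) t :=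
    hnum.div hden (by positivity)
  apply hf.congr_of_eventuallyEq
  filter_upwards [isOpen_ne.mem_nhds ht] with x hx
  rw [phiRatio, if_neg hx]

lemma phiRatio_deriv_pos {t : ℝ} (ht : t ≠ 0) : 0 < deriv phiRatio t := by
  rw [(phiRatio_hasDeriv ht).deriv]
  have hkey : (Real.exp t - 1) * t ^ 2 - phiFn t * (2 * t) = t * gFn t := by
    unfold phiFn gFn; ring
  rw [hkey]
  have hpos : 0 < t * gFn t := by
    rcases ht.lt_or_gt with h | h
    · exact mul_pos_of_neg_of_neg h (gFn_neg h)
    · exact mul_pos h (gFn_pos h)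
  positivity

lemma phiRatio_contOn_Ioi : ContinuousOn phiRatio (Set.Ioi 0) := by
  apply ContinuousOn.congr (f := fun t => phiFn t / t ^ 2)
  · apply ContinuousOn.div
    · unfold phiFn; fun_prop
    · fun_prop
    · intro x hx; exact pow_ne_zero 2 (ne_of_gt (Set.mem_Ioi.1 hx))
  · intro x hx
    rw [phiRatio, if_neg (ne_of_gt (Set.mem_Ioi.1 hx))]

lemma phiRatio_contOn_Iio : ContinuousOn phiRatio (Set.Iio 0) := by
  apply ContinuousOn.congr (f := fun t => phiFn t / t ^ 2)
  · apply ContinuousOn.div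
    · unfold phiFn; fun_prop
    · fun_prop
    · intro x hx; exact pow_ne_zero 2 (ne_of_lt (Set.mem_Iio.1 hx))
  · intro x hx
    rw [phiRatio, if_neg (ne_of_lt (Set.mem_Iio.1 hx))]

lemma phiRatio_mono_Ioi : StrictMonoOn phiRatio (Set.Ioi 0) := by
  apply strictMonoOn_of_deriv_pos (convex_Ioi 0) phiRatio_contOn_Ioi
  intro x hx
  rw [interior_Ioi] at hx
  exact phiRatio_deriv_pos (ne_of_gt hx)

lemma phiRatio_mono_Iio : StrictMonoOn phiRatio (Set.Iio 0) := by
  apply strictMonoOn_of_deriv_pos (convex_Iio 0) phiRatio_contOn_Iio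
  intro x hx
  rw [interior_Iio] at hx
  exact phiRatio_deriv_pos (ne_of_lt hx)

theorem stmt_0 : Monotone phiRatio := by
  intro a b hab
  rcases eq_or_lt_of_le hab with rfl | hlt
  · exact le_rfl
  · by_cases ha : 0 < a
    · exact (phiRatio_mono_Ioi ha (lt_trans ha hlt) hlt).le
    · by_cases hb : b < 0
      · exact (phiRatio_mono_Iio (lt_trans hlt hb) hb hlt).le
      · push_neg at ha hb
        have h1 : phiRatio a ≤ 1/2 := by
          rcases eq_or_lt_of_le ha with h | h
          · rw [h, phiRatio, if_pos rfl]
          · exact phiRatio_le_half h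
        have h2 : 1/2 ≤ phiRatio b := by
          rcases eq_or_lt_of_le hb with h | h
          · rw [← h, phiRatio, if_pos rfl]
          · exact phiRatio_ge_half h
        linarith
end

section
/- The inverse of h(x) = (x+1)·ln(x+1) − x on [0, ∞) satisfies h⁻¹(u) ≤ √(2u) + 2u/max(ln(2u), 1) for all u ≥ 0. -/
open Real

lemma logA (a : ℝ) (ha : 0 ≤ a) : a / (1 + a) ≤ Real.log (1 + a) := by
  have h1 : (0:ℝ) < 1 + a := by linarith
  have h2 := Real.log_le_sub_one_of_pos (x := (1+a)⁻¹) (by positivity)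
  rw [Real.log_inv] at h2
  have h3 : (1+a)⁻¹ - 1 = -(a/(1+a)) := by field_simp; ring
  rw [h3] at h2; linarith

lemma logB (s : ℝ) (h0 : 0 ≤ s) (h1 : s ≤ 1) : s - s^2/2 ≤ Real.log (1 + s) := by
  have hp : (0:ℝ) < 1 + s := by linarith
  rw [Real.le_log_iff_exp_le hp]
  have he := Real.exp_bound (x := s) (by rw [abs_of_nonneg h0]; exact h1) (n := 3) (by norm_num)
  rw [abs_of_nonneg h0] at he
  have hsum : ∑ m ∈ Finset.range 3, s ^ m / (m.factorial : ℝ) = 1 + s + s^2/2 := by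
    norm_num [Finset.sum_range_succ, Nat.factorial]
  rw [hsum] at he
  have he2 : Real.exp s ≤ 1 + s + s^2/2 + s^3 * (2/9) := by
    have h2 := (abs_le.1 he).2
    norm_num [Nat.factorial] at h2
    linarith
  -- exp(s - s^2/2) = exp s / exp (s^2/2) ≤ exp s * (1/(1+s^2/2))
  have hd : (1:ℝ) + s^2/2 ≤ Real.exp (s^2/2) := by
    have := Real.add_one_le_exp (s^2/2); linarith
  have hpos : (0:ℝ) < 1 + s^2/2 := by positivity
  have hexp : Real.exp (s - s^2/2) * (1 + s^2/2) ≤ Real.exp s := by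
    calc Real.exp (s - s^2/2) * (1 + s^2/2) ≤ Real.exp (s - s^2/2) * Real.exp (s^2/2) := by
          apply mul_le_mul_of_nonneg_left hd (Real.exp_nonneg _)
      _ = Real.exp s := by rw [← Real.exp_add]; ring_nf
  have : Real.exp (s - s^2/2) * (1 + s^2/2) ≤ 1 + s + s^2/2 + s^3 * (2/9) :=
    le_trans hexp he2
  have hfin : (1:ℝ) + s + s^2/2 + s^3 * (2/9) ≤ (1+s) * (1 + s^2/2) := by nlinarith
  exact le_of_mul_le_mul_right (le_trans this hfin) hpos

lemma hMono : StrictMonoOn (fun x : ℝ => (x+1) * Real.log (x+1) - x) (Set.Ici 0) := by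
  apply strictMonoOn_of_deriv_pos (convex_Ici 0)
  · apply ContinuousOn.sub
    · apply ContinuousOn.mul (by fun_prop)
      apply ContinuousOn.log (by fun_prop)
      intro x hx
      simp only [Set.mem_Ici] at hx
      intro h; linarith
    · fun_prop
  · intro x hx
    rw [interior_Ici] at hx
    simp only [Set.mem_Ioi] at hx
    have h1 : (0:ℝ) < x + 1 := by linarith
    have hd : HasDerivAt (fun x : ℝ => (x+1) * Real.log (x+1) - x) (Real.log (x+1)) x := by
      have hid : HasDerivAt (fun y : ℝ => y + 1) 1 x := (hasDerivAt_id x).add_const 1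
      have hl : HasDerivAt (fun y : ℝ => Real.log (y+1)) ((x+1)⁻¹ * 1) x :=
        by have := (Real.hasDerivAt_log (ne_of_gt h1)).comp x hid; exact this
      have hm := hid.mul hl
      have : HasDerivAt (fun y : ℝ => (y+1) * Real.log (y+1) - y) (1 * Real.log (x + 1) + (x + 1) * ((x + 1)⁻¹ * 1) - 1) x := hm.sub (hasDerivAt_id x)
      convert this using 1
      simp [mul_inv_cancel₀ (ne_of_gt h1)]
    rw [hd.deriv]
    exact Real.log_pos (by linarith)

theorem stmt_10 (u x : ℝ) (hu : 0 ≤ u) (hx : 0 ≤ x)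
    (hinv : (x + 1) * Real.log (x + 1) - x = u) :
    x ≤ Real.sqrt (2 * u) + 2 * u / max (Real.log (2 * u)) 1 := by
  set L := max (Real.log (2 * u)) 1 with hLdef
  set s := Real.sqrt (2 * u) with hsdef
  set t := 2 * u / L with htdef
  have hL1 : (1:ℝ) ≤ L := le_max_right _ _
  have hLpos : (0:ℝ) < L := by linarith
  have hs0 : 0 ≤ s := Real.sqrt_nonneg _
  have ht0 : 0 ≤ t := div_nonneg (by linarith) (by linarith)
  have hs2 : s^2 = 2*u := Real.sq_sqrt (by linarith)
  have hs1 : (0:ℝ) < s + 1 := by linarith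
  -- star : h(s+t) ≥ h(s) + t * log(1+s)
  have star : ((s+1) * Real.log (s+1) - s) + t * Real.log (s+1)
      ≤ (s+t+1) * Real.log (s+t+1) - (s+t) := by
    have hr0 : 0 ≤ t / (s+1) := div_nonneg ht0 (le_of_lt hs1)
    have hsplit : Real.log (s+t+1) = Real.log (s+1) + Real.log (1 + t/(s+1)) := by
      rw [← Real.log_mul (ne_of_gt hs1) (by positivity)]
      congr 1
      field_simp
      ring
    have hA := logA (t/(s+1)) hr0
    have h1t : (0:ℝ) < 1 + t/(s+1) := by positivity
    have hfrac : (t/(s+1)) / (1 + t/(s+1)) = t / (s+t+1) := by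
      have h2 : 1 + t/(s+1) = (s+t+1)/(s+1) := by field_simp; ring
      rw [h2, div_div_div_cancel_right₀]
      exact ne_of_gt hs1
    have hkey : t ≤ (s+t+1) * Real.log (1 + t/(s+1)) := by
      have hst1 : (0:ℝ) < s + t + 1 := by linarith
      have : t / (s+t+1) ≤ Real.log (1 + t/(s+1)) := by
        rw [← hfrac]; exact hA
      calc t = (s+t+1) * (t / (s+t+1)) := by field_simp
        _ ≤ (s+t+1) * Real.log (1 + t/(s+1)) :=
            mul_le_mul_of_nonneg_left this (le_of_lt hst1)
    rw [hsplit]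
    nlinarith [hkey]
  -- key : u ≤ h(s+t)
  have key : u ≤ (s+t+1) * Real.log (s+t+1) - (s+t) := by
    rcases le_or_gt (Real.log (2*u)) 1 with hcase | hcase
    · -- L = 1, t = 2u = s^2
      have hLe : L = 1 := max_eq_right hcase
      have htv : t = s^2 := by rw [htdef, hLe, hs2]; simp
      have hls : Real.log (1+s) = Real.log (s+1) := by rw [add_comm]
      have goal2 : s + s^2/2 ≤ (1 + s + s^2) * Real.log (s+1) := by
        rcases le_or_gt s 1 with hsle | hsgt
        · have hB := logB s hs0 hsle
          rw [hls] at hB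
          have hB2 : (1+s+s^2) * (s - s^2/2) ≤ (1+s+s^2) * Real.log (s+1) :=
            mul_le_mul_of_nonneg_left hB (by positivity)
          nlinarith [hB2, mul_nonneg (mul_nonneg (mul_nonneg hs0 hs0) hs0) (show (0:ℝ) ≤ 1 - s by linarith)]
        · have hA := logA s hs0
          rw [hls] at hA
          have hA2 : (1+s+s^2) * (s/(1+s)) ≤ (1+s+s^2) * Real.log (s+1) :=
            mul_le_mul_of_nonneg_left hA (by positivity)
          have hA3 : (1+s+s^2) * (s/(1+s)) = (s + s^2 + s^3)/(1+s) := by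
            field_simp
          have h5 : s + s^2/2 ≤ (s + s^2 + s^3)/(1+s) := by
            rw [le_div_iff₀ (show (0:ℝ) < 1 + s by linarith)]; nlinarith
          linarith [hA2, hA3.symm.le.trans hA2, h5]
      have hu2 : u = s^2/2 := by rw [hs2]; ring
      have : ((s+1) * Real.log (s+1) - s) + t * Real.log (s+1)
          = (1 + s + s^2) * Real.log (s+1) - s := by
        rw [htv]; ring
      rw [this] at star
      rw [hu2]
      linarith [goal2, star]
    · -- L = log (2u) > 1
      have hLe : L = Real.log (2*u) := max_eq_left (le_of_lt hcase)
      have h2u : (0:ℝ) < 2*u := by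
        by_contra hneg
        push_neg at hneg
        have : 2*u = 0 := le_antisymm hneg (by linarith)
        rw [this, Real.log_zero] at hcase; linarith
      have hlogs : Real.log s = L / 2 := by
        rw [hsdef, Real.log_sqrt (by linarith), hLe]
      have hspos : (0:ℝ) < s := Real.sqrt_pos.2 h2u
      have hslog : Real.log s ≤ Real.log (s+1) :=
        Real.log_le_log hspos (by linarith)
      have hhs : 0 ≤ (s+1) * Real.log (s+1) - s := by
        have hA := logA s hs0
        have : s ≤ (s+1) * Real.log (s+1) := by
          have h2 : (s+1) * (s/(1+s)) = s := by field_simp; ring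
          calc s = (s+1) * (s/(1+s)) := h2.symm
            _ ≤ (s+1) * Real.log (s+1) := by
                apply mul_le_mul_of_nonneg_left _ (le_of_lt hs1)
                rw [add_comm s 1]; exact hA
        linarith
      have htlog : u ≤ t * Real.log (s+1) := by
        have h1 : t * Real.log s = u := by
          rw [hlogs, htdef]; field_simp
        calc u = t * Real.log s := h1.symm
          _ ≤ t * Real.log (s+1) := mul_le_mul_of_nonneg_left hslog ht0
      linarith [star, hhs, htlog]
  -- conclude via strict monotonicity
  by_contra hgt
  push_neg at hgt
  have hm := hMono (Set.mem_Ici.2 (by positivity : (0:ℝ) ≤ s + t)) (Set.mem_Ici.2 hx) hgt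
  simp only at hm
  rw [hinv] at hm
  linarith [key]
end

section
/- For all u ≥ 0, the inverse of h(x) = (x+1)·ln(x+1) − x satisfies h⁻¹(u) ≤ √(2u) + u/3. -/
open Real

lemma h_hasDeriv (x : ℝ) (hx : 0 < x + 1) :
    HasDerivAt (fun t => (t + 1) * Real.log (t + 1) - t) (Real.log (x + 1)) x := by
  have h1 : HasDerivAt (fun t : ℝ => t + 1) 1 x := (hasDerivAt_id x).add_const 1
  have h2 : HasDerivAt (fun t : ℝ => Real.log (t + 1)) (1 / (x + 1)) x := by
    simpa using h1.log (ne_of_gt hx)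
  have h3 := (h1.mul h2).sub (hasDerivAt_id x)
  refine h3.congr_deriv ?_
  field_simp
  ring

lemma h_mono : StrictMonoOn (fun t => (t + 1) * Real.log (t + 1) - t) (Set.Ici (0:ℝ)) := by
  apply strictMonoOn_of_deriv_pos (convex_Ici 0)
  · apply ContinuousOn.sub _ continuousOn_id
    apply ContinuousOn.mul (by fun_prop)
    apply ContinuousOn.log (by fun_prop)
    intro t ht
    simp only [Set.mem_Ici] at ht
    intro h; linarith
  · intro t ht
    simp only [interior_Ici, Set.mem_Ioi] at ht
    rw [(h_hasDeriv t (by linarith)).deriv]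
    exact Real.log_pos (by linarith)

lemma F_hasDeriv (t : ℝ) (ht : 0 < t) :
    HasDerivAt (fun r => Real.log (1 + r + r ^ 2 / 6) - 3 * r / (3 + r))
      ((1 + t / 3) / (1 + t + t ^ 2 / 6) - 9 / (3 + t) ^ 2) t := by
  have hpos : (0:ℝ) < 1 + t + t ^ 2 / 6 := by nlinarith
  have h3t : (3:ℝ) + t ≠ 0 := by linarith
  have h1 : HasDerivAt (fun r : ℝ => 1 + r + r ^ 2 / 6) (1 + t / 3) t := by
    have ha : HasDerivAt (fun r : ℝ => 1 + r) 1 t := (hasDerivAt_id t).const_add 1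
    have hb : HasDerivAt (fun r : ℝ => r ^ 2 / 6) (2 * t ^ 1 / 6) t :=
      (hasDerivAt_pow 2 t).div_const 6
    have := ha.add hb
    exact this.congr_deriv (by ring)
  have hlog : HasDerivAt (fun r : ℝ => Real.log (1 + r + r ^ 2 / 6))
      ((1 + t / 3) / (1 + t + t ^ 2 / 6)) t := by
    simpa [div_eq_mul_inv, mul_comm] using h1.log (ne_of_gt hpos)
  have hfrac : HasDerivAt (fun r : ℝ => 3 * r / (3 + r)) (9 / (3 + t) ^ 2) t := by
    have ha : HasDerivAt (fun r : ℝ => 3 * r) 3 t := by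
      simpa using (hasDerivAt_id t).const_mul 3
    have hb : HasDerivAt (fun r : ℝ => 3 + r) 1 t := (hasDerivAt_id t).const_add 3
    have := ha.div hb h3t
    refine this.congr_deriv ?_
    field_simp
    ring
  exact hlog.sub hfrac

lemma keyF (s : ℝ) (hs : 0 ≤ s) : 3 * s / (3 + s) ≤ Real.log (1 + s + s ^ 2 / 6) := by
  have key : MonotoneOn (fun t => Real.log (1 + t + t ^ 2 / 6) - 3 * t / (3 + t))
      (Set.Ici (0:ℝ)) := by
    apply monotoneOn_of_deriv_nonneg (convex_Ici 0)
    · apply ContinuousOn.sub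
      · apply ContinuousOn.log (by fun_prop)
        intro t ht
        simp only [Set.mem_Ici] at ht
        nlinarith
      · apply ContinuousOn.div (by fun_prop) (by fun_prop)
        intro t ht
        simp only [Set.mem_Ici] at ht
        intro h; linarith
    · intro t ht
      simp only [interior_Ici, Set.mem_Ioi] at ht
      exact (F_hasDeriv t ht).differentiableAt.differentiableWithinAt
    · intro t ht
      simp only [interior_Ici, Set.mem_Ioi] at ht
      rw [(F_hasDeriv t ht).deriv]
      have hpos : (0:ℝ) < 1 + t + t ^ 2 / 6 := by nlinarith
      rw [sub_nonneg, div_le_div_iff₀ (by positivity) hpos]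
      nlinarith [sq_nonneg t, mul_pos ht ht]
  have := key Set.self_mem_Ici (Set.mem_Ici.mpr hs) hs
  norm_num at this
  linarith

lemma keyf (s : ℝ) (hs : 0 ≤ s) :
    s ^ 2 / 2 ≤ (s + s ^ 2 / 6 + 1) * Real.log (s + s ^ 2 / 6 + 1) - (s + s ^ 2 / 6) := by
  have hasD : ∀ t : ℝ, 0 < t →
      HasDerivAt (fun r => (r + r ^ 2 / 6 + 1) * Real.log (r + r ^ 2 / 6 + 1)
        - (r + r ^ 2 / 6) - r ^ 2 / 2)
      ((1 + t / 3) * Real.log (t + t ^ 2 / 6 + 1)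
        + (t + t ^ 2 / 6 + 1) * ((1 + t / 3) / (t + t ^ 2 / 6 + 1)) - (1 + t / 3) - t) t := by
    intro t ht
    have hpos : (0:ℝ) < t + t ^ 2 / 6 + 1 := by nlinarith
    have ha : HasDerivAt (fun r : ℝ => r + r ^ 2 / 6) (1 + t / 3) t := by
      have := (hasDerivAt_id t).add ((hasDerivAt_pow 2 t).div_const 6)
      exact this.congr_deriv (by ring)
    have h1 : HasDerivAt (fun r : ℝ => r + r ^ 2 / 6 + 1) (1 + t / 3) t := ha.add_const 1
    have hlog : HasDerivAt (fun r : ℝ => Real.log (r + r ^ 2 / 6 + 1))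
        ((1 + t / 3) / (t + t ^ 2 / 6 + 1)) t := by
      simpa [div_eq_mul_inv, mul_comm] using h1.log (ne_of_gt hpos)
    have hsq : HasDerivAt (fun r : ℝ => r ^ 2 / 2) t t := by
      have := (hasDerivAt_pow 2 t).div_const 2
      exact this.congr_deriv (by ring)
    exact ((h1.mul hlog).sub ha).sub hsq
  have key : MonotoneOn (fun t => (t + t ^ 2 / 6 + 1) * Real.log (t + t ^ 2 / 6 + 1)
      - (t + t ^ 2 / 6) - t ^ 2 / 2) (Set.Ici (0:ℝ)) := by
    apply monotoneOn_of_deriv_nonneg (convex_Ici 0)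
    · apply ContinuousOn.sub
      apply ContinuousOn.sub
      · apply ContinuousOn.mul (by fun_prop)
        apply ContinuousOn.log (by fun_prop)
        intro t ht
        simp only [Set.mem_Ici] at ht
        nlinarith
      · fun_prop
      · fun_prop
    · intro t ht
      simp only [interior_Ici, Set.mem_Ioi] at ht
      exact (hasD t ht).differentiableAt.differentiableWithinAt
    · intro t ht
      simp only [interior_Ici, Set.mem_Ioi] at ht
      rw [(hasD t ht).deriv]
      have hpos : (0:ℝ) < t + t ^ 2 / 6 + 1 := by nlinarith
      have h13 : (0:ℝ) < 1 + t / 3 := by linarith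
      have hlogge := keyF t (le_of_lt ht)
      have hid : (1 + t / 3) * (3 * t / (3 + t)) = t := by
        field_simp
      have hdivsimp : (t + t ^ 2 / 6 + 1) * ((1 + t / 3) / (t + t ^ 2 / 6 + 1)) = 1 + t / 3 := by
        field_simp
      have harg : t + t ^ 2 / 6 + 1 = 1 + t + t ^ 2 / 6 := by ring
      have hmulge : t ≤ (1 + t / 3) * Real.log (t + t ^ 2 / 6 + 1) := by
        rw [harg]
        calc t = (1 + t / 3) * (3 * t / (3 + t)) := hid.symm
        _ ≤ (1 + t / 3) * Real.log (1 + t + t ^ 2 / 6) :=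
          mul_le_mul_of_nonneg_left hlogge (le_of_lt h13)
      rw [hdivsimp]
      linarith
  have := key Set.self_mem_Ici (Set.mem_Ici.mpr hs) hs
  norm_num at this
  linarith

theorem stmt_11 (u x : ℝ) (hu : 0 ≤ u) (hx : 0 ≤ x)
    (hinv : (x + 1) * Real.log (x + 1) - x = u) :
    x ≤ Real.sqrt (2 * u) + u / 3 := by
  set s := Real.sqrt (2 * u) with hsdef
  have hs : 0 ≤ s := Real.sqrt_nonneg _
  have hs2 : s ^ 2 = 2 * u := Real.sq_sqrt (by linarith)
  have hy : s + s ^ 2 / 6 = s + u / 3 := by rw [hs2]; ring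
  have hkey := keyf s hs
  rw [hy] at hkey
  have hkey' : u ≤ (s + u / 3 + 1) * Real.log (s + u / 3 + 1) - (s + u / 3) := by
    have : s ^ 2 / 2 = u := by rw [hs2]; ring
    linarith
  by_contra hcon
  push_neg at hcon
  have hy0 : 0 ≤ s + u / 3 := by positivity
  have := h_mono (Set.mem_Ici.mpr hy0) (Set.mem_Ici.mpr hx) hcon
  simp only at this
  linarith
end

section
/- For any a > 0 and t ∈ ℝ, φ(t) + a·(φ(t) − t²/2) ≤ φ((1+a)·t)/(1+a)², where φ(t) = e^t − 1 − t. -/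
open Real

theorem stmt_14 (a t : ℝ) (ha : 0 < a) :
    (Real.exp t - 1 - t) + a * ((Real.exp t - 1 - t) - t ^ 2 / 2) ≤
      (Real.exp ((1 + a) * t) - 1 - (1 + a) * t) / (1 + a) ^ 2 := by
  set b : ℝ := 1 + a with hb
  have hb1 : (1:ℝ) < b := by simp [hb]; linarith
  have hb0 : (0:ℝ) < b := by linarith
  -- Second derivative nonneg: exp(b x) - b * exp x + (b - 1) ≥ 0  (Bernoulli)
  have h2 : ∀ x : ℝ, 0 ≤ Real.exp (b * x) - b * Real.exp x + (b - 1) := by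
    intro x
    have hu : (0:ℝ) < Real.exp x := Real.exp_pos x
    have hber := one_add_mul_self_le_rpow_one_add (s := Real.exp x - 1)
      (by linarith) (p := b) hb1.le
    have h1s : (1 : ℝ) + (Real.exp x - 1) = Real.exp x := by ring
    rw [h1s] at hber
    have hexp : Real.exp x ^ b = Real.exp (b * x) := by
      rw [← Real.exp_mul, mul_comm]
    rw [hexp] at hber
    nlinarith [hber]
  -- first derivative function
  set g1 : ℝ → ℝ := fun x => (Real.exp (b * x) - 1) / b - b * (Real.exp x - 1)
    + (b - 1) * x with hg1
  have hg1deriv : ∀ x : ℝ, HasDerivAt g1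
      (Real.exp (b * x) - b * Real.exp x + (b - 1)) x := by
    intro x
    have h1 : HasDerivAt (fun x => Real.exp (b * x)) (Real.exp (b * x) * b) x := by
      exact ((Real.hasDerivAt_exp (b * x)).comp x
        ((hasDerivAt_id x).const_mul b)).congr_deriv (by simp)
    have h := (((h1.sub_const 1).div_const b).sub
      (((Real.hasDerivAt_exp x).sub_const 1).const_mul b)).add
      ((hasDerivAt_id x).const_mul (b - 1))
    refine h.congr_deriv (Eq.symm ?_)
    field_simp
  have hg1mono : Monotone g1 := by
    apply monotone_of_deriv_nonneg
    · exact fun x => (hg1deriv x).differentiableAt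
    · intro x
      rw [(hg1deriv x).deriv]
      exact h2 x
  have hg10 : g1 0 = 0 := by simp [hg1]
  -- main function
  set g : ℝ → ℝ := fun x => (Real.exp (b * x) - 1 - b * x) / b ^ 2
    - b * (Real.exp x - 1 - x) + (b - 1) * x ^ 2 / 2 with hg
  have hgderiv : ∀ x : ℝ, HasDerivAt g (g1 x) x := by
    intro x
    have h1 : HasDerivAt (fun x => Real.exp (b * x)) (Real.exp (b * x) * b) x := by
      exact ((Real.hasDerivAt_exp (b * x)).comp x
        ((hasDerivAt_id x).const_mul b)).congr_deriv (by simp)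
    have hx2 : HasDerivAt (fun x : ℝ => x ^ 2) (2 * x) x := by
      simpa using hasDerivAt_pow 2 x
    have h := ((((h1.sub_const 1).sub ((hasDerivAt_id x).const_mul b)).div_const
      (b ^ 2)).sub
      ((((Real.hasDerivAt_exp x).sub_const 1).sub (hasDerivAt_id x)).const_mul b)).add
      ((hx2.const_mul (b - 1)).div_const 2)
    refine h.congr_deriv (Eq.symm ?_)
    simp only [hg1]
    field_simp
  have hg0 : g 0 = 0 := by simp [hg]
  have hgt : 0 ≤ g t := by
    rcases le_total 0 t with h | h
    · have hmono : MonotoneOn g (Set.Ici 0) := by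
        apply monotoneOn_of_deriv_nonneg (convex_Ici 0)
          (Continuous.continuousOn (by
            fun_prop))
          (fun x _ => (hgderiv x).differentiableAt.differentiableWithinAt)
        intro x hx
        rw [(hgderiv x).deriv]
        have := hg1mono (le_of_lt (by simpa using hx) : (0:ℝ) ≤ x)
        rw [hg10] at this
        exact this
      have := hmono (Set.mem_Ici.mpr le_rfl) (Set.mem_Ici.mpr h) h
      linarith [hg0 ▸ this]
    · have hanti : AntitoneOn g (Set.Iic 0) := by
        apply antitoneOn_of_deriv_nonpos (convex_Iic 0)
          (Continuous.continuousOn (by fun_prop))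
          (fun x _ => (hgderiv x).differentiableAt.differentiableWithinAt)
        intro x hx
        rw [(hgderiv x).deriv]
        have := hg1mono (le_of_lt (by simpa using hx) : x ≤ (0:ℝ))
        rw [hg10] at this
        exact this
      have := hanti (Set.mem_Iic.mpr h) (Set.mem_Iic.mpr le_rfl) h
      linarith [hg0 ▸ this]
  have hexpand : g t = (Real.exp (b * t) - 1 - b * t) / b ^ 2
      - b * (Real.exp t - 1 - t) + (b - 1) * t ^ 2 / 2 := rfl
  rw [hexpand] at hgt
  simp only [hb] at hgt ⊢
  nlinarith [hgt]
end

section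
/- Let α, u, σ > 0 and define z = (4·max(ln(eu/σ), 1))^{1/α} if α ≥ 1, and z = ((4/α)·ln(e/α) + 4·max(ln(u/σ), 0))^{1/α} if α < 1. Then exp(z^α) ≥ (e⁴/16)·(uz/σ)². -/
open Real

lemma aux16 (u σ z B α : ℝ) (hu : 0 < u) (hσ : 0 < σ) (hα : 0 < α) (hB : 0 < B)
    (hzB : z = B ^ (1/α))
    (key : 4 - Real.log 16 + 2*(Real.log (u/σ) + (1/α)*Real.log B) ≤ B) :
    Real.exp 4 / 16 * (u * z / σ) ^ 2 ≤ Real.exp (z ^ α) := by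
  have hz0 : 0 < z := by
    rw [hzB]; exact Real.rpow_pos_of_pos hB _
  have hzα : z ^ α = B := by
    rw [hzB, ← Real.rpow_mul hB.le, one_div_mul_cancel hα.ne', Real.rpow_one]
  rw [hzα]
  have hX : 0 < Real.exp 4 / 16 * (u * z / σ) ^ 2 := by positivity
  rw [← Real.exp_log hX, Real.exp_le_exp]
  have h1 : u * z / σ = (u/σ) * z := by ring
  have h2 : Real.log (Real.exp 4 / 16 * (u * z / σ) ^ 2)
      = 4 - Real.log 16 + 2 * (Real.log (u/σ) + Real.log z) := by
    rw [Real.log_mul (by positivity) (by positivity), Real.log_div (by positivity) (by norm_num),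
      Real.log_exp, Real.log_pow, h1, Real.log_mul (by positivity) hz0.ne']
    push_cast; ring
  have h3 : Real.log z = (1/α) * Real.log B := by
    rw [hzB, Real.log_rpow hB]
  rw [h2, h3]; exact key

lemma key16_1 (α u σ : ℝ) (hα : 0 < α) (hu : 0 < u) (hσ : 0 < σ) (h1 : 1 ≤ α) :
    4 - Real.log 16 + 2*(Real.log (u/σ) + (1/α)*Real.log (4 * max (Real.log (Real.exp 1 * u / σ)) 1))
      ≤ 4 * max (Real.log (Real.exp 1 * u / σ)) 1 := by
  set M := max (Real.log (Real.exp 1 * u / σ)) 1 with hM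
  have hM1 : 1 ≤ M := le_max_right _ _
  have hus : Real.log (u/σ) ≤ M - 1 := by
    have : Real.log (Real.exp 1 * u / σ) = 1 + Real.log (u/σ) := by
      rw [mul_div_assoc, Real.log_mul (Real.exp_pos 1).ne' (by positivity), Real.log_exp]
    have h2 : Real.log (Real.exp 1 * u / σ) ≤ M := le_max_left _ _
    linarith
  have hlogB : Real.log (4 * M) = Real.log 4 + Real.log M := by
    rw [Real.log_mul (by norm_num) (by linarith)]
  have hlogM : Real.log M ≤ M - 1 := Real.log_le_sub_one_of_pos (by linarith)
  have hlog16 : Real.log 16 = 2 * Real.log 4 := by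
    rw [show (16:ℝ) = 4^2 by norm_num, Real.log_pow]; push_cast; ring
  have hlogB0 : 0 ≤ Real.log (4*M) := by
    apply Real.log_nonneg; nlinarith
  have hinv : 1/α ≤ 1 := by
    rw [div_le_one hα]; linarith
  have h4 : (1/α) * Real.log (4*M) ≤ Real.log (4*M) := by
    nlinarith [mul_le_of_le_one_left hlogB0 hinv]
  nlinarith [h4, hlogB, hlogM, hus]

lemma key16_2 (α u σ : ℝ) (hα : 0 < α) (hu : 0 < u) (hσ : 0 < σ) (h1 : α < 1) :
    4 - Real.log 16 + 2*(Real.log (u/σ) +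
      (1/α)*Real.log ((4 / α) * Real.log (Real.exp 1 / α) + 4 * max (Real.log (u / σ)) 0))
      ≤ (4 / α) * Real.log (Real.exp 1 / α) + 4 * max (Real.log (u / σ)) 0 := by
  set β := 1/α with hβdef
  have hβ : 1 < β := by rw [hβdef]; exact (one_lt_one_div hα h1)
  set N := max (Real.log (u/σ)) 0 with hN
  have hN0 : 0 ≤ N := le_max_right _ _
  have husN : Real.log (u/σ) ≤ N := le_max_left _ _
  set L := Real.log (Real.exp 1 / α) with hLdef
  have hL : L = 1 + Real.log β := by
    rw [hLdef, Real.log_div (Real.exp_pos 1).ne' hα.ne', Real.log_exp, hβdef,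
      Real.log_div one_ne_zero hα.ne', Real.log_one]
    ring
  have hlogβ0 : 0 ≤ Real.log β := Real.log_nonneg hβ.le
  have hlogβ : Real.log β ≤ β - 1 := Real.log_le_sub_one_of_pos (by linarith)
  have hL1 : 1 ≤ L := by rw [hL]; linarith
  have hLβ : L ≤ β := by rw [hL]; linarith
  have hβL : 0 < β * L := by nlinarith
  have h4α : 4/α = 4 * β := by rw [hβdef]; ring
  rw [h4α]
  set B := 4 * β * L + 4 * N with hBdef
  have hB : 0 < B := by nlinarith
  -- log B ≤ log (4 β L) + N/(β L)
  have hsplit : B = (4 * β * L) * (1 + N / (β * L)) := by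
    rw [hBdef]
    field_simp
  have hlogB : Real.log B ≤ Real.log (4 * (β * L)) + N / (β * L) := by
    rw [hsplit]
    have ht : 0 < 1 + N / (β*L) := by positivity
    rw [Real.log_mul (by positivity) ht.ne']
    have := Real.log_le_sub_one_of_pos ht
    have he : 4 * β * L = 4 * (β * L) := by ring
    rw [he]
    linarith
  have hlog4βL : Real.log (4 * (β * L)) = Real.log 4 + Real.log β + Real.log L := by
    rw [Real.log_mul (by norm_num) hβL.ne', Real.log_mul (by linarith : β ≠ 0) (by linarith : L ≠ 0)]
    ring
  have hlogL : Real.log L ≤ Real.log β := Real.log_le_log (by linarith) hLβ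
  have hlog2 : Real.log 2 ≤ 1 := by linarith [Real.log_le_sub_one_of_pos (by norm_num : (0:ℝ) < 2)]
  have hlog2' : 0 ≤ Real.log 2 := Real.log_nonneg (by norm_num)
  have hlog4 : Real.log 4 = 2 * Real.log 2 := by
    rw [show (4:ℝ) = 2^2 by norm_num, Real.log_pow]; push_cast; ring
  have hlog16 : Real.log 16 = 4 * Real.log 2 := by
    rw [show (16:ℝ) = 2^4 by norm_num, Real.log_pow]; push_cast; ring
  have hNL : N / (β * L) * β ≤ N := by
    rw [div_mul_eq_mul_div, mul_comm β L, mul_div_assoc]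
    have : β / (L * β) = 1 / L := by
      rw [eq_div_iff (by linarith : L ≠ 0)]
      field_simp
    rw [this]
    calc N * (1/L) = N / L := by ring
    _ ≤ N := div_le_self hN0 hL1
  -- now combine
  have hβlogB : β * Real.log B ≤ β * (Real.log 4 + Real.log β + Real.log L) + N := by
    have h := mul_le_mul_of_nonneg_left hlogB (by linarith : (0:ℝ) ≤ β)
    rw [hlog4βL] at h
    nlinarith [hNL]
  nlinarith [hβlogB, husN, hBdef, hlog16, hlog4,
    mul_le_mul_of_nonneg_left hlogL (by linarith : (0:ℝ) ≤ β),
    mul_le_mul_of_nonneg_left hlog2 (by linarith : (0:ℝ) ≤ β - 1), hL]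

theorem stmt_16 (α u σ : ℝ) (hα : 0 < α) (hu : 0 < u) (hσ : 0 < σ)
    (z : ℝ)
    (hz : z = if 1 ≤ α then
        (4 * max (Real.log (Real.exp 1 * u / σ)) 1) ^ (1 / α)
      else
        ((4 / α) * Real.log (Real.exp 1 / α) + 4 * max (Real.log (u / σ)) 0) ^ (1 / α)) :
    Real.exp 4 / 16 * (u * z / σ) ^ 2 ≤ Real.exp (z ^ α) := by
  rcases le_or_gt 1 α with h | h
  · rw [if_pos h] at hz
    have hB : 0 < 4 * max (Real.log (Real.exp 1 * u / σ)) 1 := by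
      nlinarith [le_max_right (Real.log (Real.exp 1 * u / σ)) (1:ℝ)]
    exact aux16 u σ z _ α hu hσ hα hB hz (key16_1 α u σ hα hu hσ h)
  · rw [if_neg (not_le.mpr h)] at hz
    have hL1 : (1:ℝ) ≤ Real.log (Real.exp 1 / α) := by
      rw [Real.log_div (Real.exp_pos 1).ne' hα.ne', Real.log_exp]
      linarith [Real.log_nonpos hα.le h.le]
    have hN0 : (0:ℝ) ≤ max (Real.log (u / σ)) 0 := le_max_right _ _
    have hB : 0 < (4 / α) * Real.log (Real.exp 1 / α) + 4 * max (Real.log (u / σ)) 0 := by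
      have : 0 < 4 / α := by positivity
      nlinarith
    exact aux16 u σ z _ α hu hσ hα hB hz (key16_2 α u σ hα hu hσ h)
end

section
/- Let Y₁,…,Yₙ be i.i.d. random variables with values in a measurable space 𝒴, and let g₁,…,gₙ : 𝒴ⁿ → ℝ₊ be measurable integrable functions such that each gᵢ(y₁,…,yₙ) does not depend on yᵢ and Σᵢ gᵢ(Y) ≤ M almost surely. For a permutation π of [n], let 𝓕_{π([1,i−1])} = σ(Y_{π(1)},…,Y_{π(i−1)}). Then (1/n!)·Σ_{π ∈ Πₙ} Σ_{i=1}^n E[g_{π(i)}(Y) | 𝓕_{π([1,i−1])}] ≤ ((n+1)/n)·M almost surely. -/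
open MeasureTheory ProbabilityTheory

theorem my_indep_mono {Ω : Type*} {m0 : MeasurableSpace Ω} {μ : Measure Ω}
    {m₁ m₂ m₁' m₂' : MeasurableSpace Ω} (h : Indep m₁ m₂ μ)
    (h1 : m₁' ≤ m₁) (h2 : m₂' ≤ m₂) : Indep m₁' m₂' μ := by
  rw [Indep_iff] at h ⊢
  exact fun t1 t2 ht1 ht2 => h t1 t2 (h1 _ ht1) (h2 _ ht2)

theorem my_condexp_sup_indep {Ω : Type*} {m₁ m₂ m₃ : MeasurableSpace Ω}
    {m0 : MeasurableSpace Ω} {μ : Measure Ω} [IsProbabilityMeasure μ] {f : Ω → ℝ}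
    (h3 : m₃ ≤ m0) (h2 : m₂ ≤ m0) (h13 : m₁ ≤ m₃)
    (hf : StronglyMeasurable[m₃] f) (hfint : Integrable f μ)
    (hindep : Indep m₃ m₂ μ) :
    μ[f | m₁ ⊔ m₂] =ᵐ[μ] μ[f | m₁] := by
  have h1 : m₁ ≤ m0 := h13.trans h3
  have hsup : m₁ ⊔ m₂ ≤ m0 := sup_le h1 h2
  set piSys : Set (Set Ω) :=
    {s | ∃ A B, MeasurableSet[m₁] A ∧ MeasurableSet[m₂] B ∧ s = A ∩ B} with hpiSys
  have hgen : (m₁ ⊔ m₂) = MeasurableSpace.generateFrom piSys := by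
    refine le_antisymm (sup_le ?_ ?_) (MeasurableSpace.generateFrom_le ?_)
    · exact fun A hA => MeasurableSpace.measurableSet_generateFrom
        ⟨A, Set.univ, hA, MeasurableSet.univ, (Set.inter_univ A).symm⟩
    · exact fun B hB => MeasurableSpace.measurableSet_generateFrom
        ⟨Set.univ, B, MeasurableSet.univ, hB, (Set.univ_inter B).symm⟩
    · rintro s ⟨A, B, hA, hB, rfl⟩
      exact ((le_sup_left : m₁ ≤ m₁ ⊔ m₂) A hA).inter ((le_sup_right : m₂ ≤ m₁ ⊔ m₂) B hB)
  have hpi : IsPiSystem piSys := by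
    rintro s ⟨A, B, hA, hB, rfl⟩ t ⟨A', B', hA', hB', rfl⟩ -
    exact ⟨A ∩ A', B ∩ B', hA.inter hA', hB.inter hB', by
      rw [Set.inter_inter_inter_comm]⟩
  have main : ∀ (φ : Ω → ℝ), StronglyMeasurable[m₃] φ → Integrable φ μ →
      ∀ A B, MeasurableSet[m₁] A → MeasurableSet[m₂] B →
      ∫ x in A ∩ B, φ x ∂μ = (∫ x in A, φ x ∂μ) * (μ B).toReal := by
    intro φ hφm hφint A B hA hB
    have hXm : Measurable[m₃] (A.indicator φ) :=
      hφm.measurable.indicator (h13 _ hA)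
    have hZm : Measurable[m₂] (B.indicator (fun _ => (1 : ℝ))) :=
      measurable_const.indicator hB
    have hXZ : IndepFun (A.indicator φ) (B.indicator fun _ => (1 : ℝ)) μ := by
      rw [IndepFun_iff_Indep]
      exact my_indep_mono hindep hXm.comap_le hZm.comap_le
    have hmul := hXZ.integral_mul_eq_mul_integral
      (hφint.indicator (h1 _ hA)).aestronglyMeasurable
      ((integrable_const (1 : ℝ)).indicator (h2 _ hB)).aestronglyMeasurable
    have heq : (fun ω => A.indicator φ ω * B.indicator (fun _ => (1:ℝ)) ω)
        = (A ∩ B).indicator φ := by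
      funext x
      by_cases hxA : x ∈ A <;> by_cases hxB : x ∈ B <;>
        simp [Set.indicator_apply, hxA, hxB, Set.mem_inter_iff]
    calc ∫ x in A ∩ B, φ x ∂μ = ∫ x, (A ∩ B).indicator φ x ∂μ := by
          rw [integral_indicator ((h1 _ hA).inter (h2 _ hB))]
      _ = ∫ x, A.indicator φ x * B.indicator (fun _ => (1:ℝ)) x ∂μ := by rw [← heq]
      _ = (∫ x, A.indicator φ x ∂μ) * ∫ x, B.indicator (fun _ => (1:ℝ)) x ∂μ := hmul
      _ = (∫ x in A, φ x ∂μ) * (μ B).toReal := by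
          rw [integral_indicator (h1 _ hA), integral_indicator_const _ (h2 _ hB)]
          simp [Measure.real]
  have key : ∀ ⦃s⦄, MeasurableSet[m₁ ⊔ m₂] s →
      ∫ x in s, (μ[f|m₁]) x ∂μ = ∫ x in s, f x ∂μ := by
    refine @MeasurableSpace.induction_on_inter Ω (m₁ ⊔ m₂)
      (fun s _ => ∫ x in s, (μ[f|m₁]) x ∂μ = ∫ x in s, f x ∂μ) piSys
      hgen hpi (by simp) ?_ ?_ ?_
    · rintro s ⟨A, B, hA, hB, rfl⟩
      rw [main _ ((stronglyMeasurable_condExp.mono h13 : StronglyMeasurable[m₃] (μ[f|m₁])))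
        integrable_condExp A B hA hB,
        main f hf hfint A B hA hB, setIntegral_condExp h1 hfint hA]
    · intro t ht hteq
      have ht' : MeasurableSet[m0] t := hsup _ ht
      rw [setIntegral_compl ht' integrable_condExp, setIntegral_compl ht' hfint, hteq,
        integral_condExp h1 (f := f)]
    · intro s hdisj hmeas' heq'
      have hms : ∀ i, MeasurableSet[m0] (s i) := fun i => hsup _ (hmeas' i)
      rw [integral_iUnion hms hdisj integrable_condExp.integrableOn,
        integral_iUnion hms hdisj hfint.integrableOn]
      exact tsum_congr heq'
  exact (ae_eq_condExp_of_forall_setIntegral_eq hsup hfint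
    (fun s _ _ => integrable_condExp.integrableOn)
    (fun s hs _ => key hs)
    ((stronglyMeasurable_condExp.mono le_sup_left : StronglyMeasurable[m₁ ⊔ m₂] (μ[f|m₁])).aestronglyMeasurable (μ := μ))).symm

theorem my_biSup_swap {ι α : Type*} [CompleteLattice α] (σ : Equiv.Perm ι) (s : Finset ι)
    (hs : ∀ j ∈ s, σ j ∈ s) (hinv : ∀ j, σ (σ j) = j) (F : ι → α) :
    ⨆ j ∈ s, F (σ j) = ⨆ j ∈ s, F j := by
  apply le_antisymm
  · exact iSup₂_le fun j hj => le_iSup₂ (f := fun l (_ : l ∈ s) => F l) (σ j) (hs j hj)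
  · refine iSup₂_le fun j hj => ?_
    have h : F j = F (σ (σ j)) := by rw [hinv]
    rw [h]
    exact le_iSup₂ (f := fun l (_ : l ∈ s) => F (σ l)) (σ j) (hs j hj)

theorem my_card_filter_lt (n j : ℕ) (hj : j ≤ n) :
    (Finset.univ.filter fun p : Fin n => (p : ℕ) < j).card = j := by
  induction j with
  | zero => simp
  | succ m ih =>
    have hins : (Finset.univ.filter fun p : Fin n => (p : ℕ) < m + 1)
        = insert ⟨m, hj⟩ (Finset.univ.filter fun p : Fin n => (p : ℕ) < m) := by
      ext p
      simp only [Finset.mem_filter, Finset.mem_univ, true_and, Finset.mem_insert, Fin.ext_iff]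
      omega
    rw [hins, Finset.card_insert_of_notMem (by simp), ih (Nat.le_of_succ_le hj)]

theorem my_card_filter_ge (n j : ℕ) (hj : j ≤ n) :
    (Finset.univ.filter fun p : Fin n => j ≤ (p : ℕ)).card = n - j := by
  have h := Finset.card_filter_add_card_filter_not
    (s := (Finset.univ : Finset (Fin n))) (p := fun p : Fin n => (p : ℕ) < j)
  have h2 : (Finset.univ.filter fun p : Fin n => ¬ (p : ℕ) < j)
      = Finset.univ.filter fun p : Fin n => j ≤ (p : ℕ) := by
    apply Finset.filter_congr; intro p _; simp [not_lt]
  rw [my_card_filter_lt n j hj, h2, Finset.card_univ, Fintype.card_fin] at h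
  omega

theorem stmt_19 {Ω 𝒴 : Type*} {mΩ : MeasurableSpace Ω} {m𝒴 : MeasurableSpace 𝒴}
    (μ : Measure Ω) [IsProbabilityMeasure μ] (n : ℕ) (hn : 0 < n)
    (Y : Fin n → Ω → 𝒴) (hmeas : ∀ i, Measurable (Y i))
    (hindep : iIndepFun Y μ)
    (hid : ∀ i j, IdentDistrib (Y i) (Y j) μ μ)
    (g : Fin n → (Fin n → 𝒴) → ℝ)
    (hgmeas : ∀ i, Measurable (g i))
    (hgnn : ∀ i y, 0 ≤ g i y)
    (hgint : ∀ i, Integrable (fun ω => g i (fun j => Y j ω)) μ)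
    (hgind : ∀ i (y y' : Fin n → 𝒴), (∀ j, j ≠ i → y j = y' j) → g i y = g i y')
    (M : ℝ)
    (hM : ∀ᵐ ω ∂μ, ∑ i, g i (fun j => Y j ω) ≤ M) :
    ∀ᵐ ω ∂μ,
      (1 / (n.factorial : ℝ)) *
        ∑ π : Equiv.Perm (Fin n), ∑ i : Fin n,
          (μ[(fun ω' => g (π i) (fun j => Y j ω')) |
            ⨆ j ∈ Finset.univ.filter (fun j : Fin n => j < i),
              MeasurableSpace.comap (Y (π j)) m𝒴]) ω
      ≤ ((n + 1 : ℝ) / n) * M := by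
  classical
  haveI : (ae μ).NeBot := ae_neBot.mpr (IsProbabilityMeasure.ne_zero μ)
  obtain ⟨ω₀, hω₀⟩ := hM.exists
  have hM0 : 0 ≤ M := le_trans (Finset.sum_nonneg fun i _ => hgnn i _) hω₀
  set y₀ : 𝒴 := Y ⟨0, hn⟩ ω₀ with hy₀
  set gY : Fin n → Ω → ℝ := fun k ω => g k (fun j => Y j ω) with hgY
  set mP : Equiv.Perm (Fin n) → ℕ → MeasurableSpace Ω :=
    fun π m => ⨆ j ∈ Finset.univ.filter (fun p : Fin n => (p : ℕ) < m),
      MeasurableSpace.comap (Y (π j)) m𝒴 with hmP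
  have hmP_le : ∀ π m, mP π m ≤ mΩ := fun π m =>
    iSup₂_le fun j _ => (hmeas (π j)).comap_le
  set u : Equiv.Perm (Fin n) → ℕ → Fin n → Ω → ℝ :=
    fun π m p => μ[gY (π p) | mP π m] with hu
  -- measurability of gY k wrt σ-algebra of the other coordinates, and independence
  have hm3_le : ∀ k : Fin n,
      (⨆ l ∈ ({k}ᶜ : Set (Fin n)), MeasurableSpace.comap (Y l) m𝒴) ≤ mΩ :=
    fun k => iSup₂_le fun l _ => (hmeas l).comap_le
  have hgYmeas3 : ∀ k : Fin n,
      StronglyMeasurable[⨆ l ∈ ({k}ᶜ : Set (Fin n)), MeasurableSpace.comap (Y l) m𝒴] (gY k) := by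
    intro k
    set m₃ := ⨆ l ∈ ({k}ᶜ : Set (Fin n)), MeasurableSpace.comap (Y l) m𝒴 with hm₃
    have hYm : ∀ l : Fin n, l ≠ k → Measurable[m₃] (Y l) := by
      intro l hl
      have hle : MeasurableSpace.comap (Y l) m𝒴 ≤ m₃ :=
        le_iSup₂ (f := fun l (_ : l ∈ ({k}ᶜ : Set (Fin n))) =>
          MeasurableSpace.comap (Y l) m𝒴) l hl
      exact measurable_iff_comap_le.mpr hle
    have hcomp : gY k
        = (fun z : {l : Fin n // l ≠ k} → 𝒴 => g k (fun j => if h : j = k then y₀ else z ⟨j, h⟩))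
          ∘ (fun ω => fun l : {l : Fin n // l ≠ k} => Y l.1 ω) := by
      funext ω
      exact hgind k _ _ (fun j hj => by simp [hj])
    rw [hcomp]
    have hG : Measurable (fun z : {l : Fin n // l ≠ k} → 𝒴 =>
        g k (fun j => if h : j = k then y₀ else z ⟨j, h⟩)) := by
      refine (hgmeas k).comp (measurable_pi_lambda _ (fun j => ?_))
      by_cases h : j = k
      · simp [h]
      · simp only [h, dif_neg, not_false_iff]
        exact measurable_pi_apply _
    exact (hG.comp (measurable_pi_lambda _ (fun l => hYm l.1 l.2))).stronglyMeasurable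
  have hIndep3 : ∀ k : Fin n,
      Indep (⨆ l ∈ ({k}ᶜ : Set (Fin n)), MeasurableSpace.comap (Y l) m𝒴)
        (MeasurableSpace.comap (Y k) m𝒴) μ := by
    intro k
    have hii : iIndep (fun l : Fin n => MeasurableSpace.comap (Y l) m𝒴) μ := by
      rw [iIndepFun_iff_iIndep] at hindep; exact hindep
    have h := indep_iSup_of_disjoint (fun l => (hmeas l).comap_le) hii
      (disjoint_compl_left : Disjoint ({k}ᶜ : Set (Fin n)) {k})
    simpa [iSup_singleton] using h
  -- Step B : dropping the information of Y (π i)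
  have hB : ∀ (π : Equiv.Perm (Fin n)) (i : Fin n),
      u π ((i : ℕ) + 1) i =ᵐ[μ] u π (i : ℕ) i := by
    intro π i
    have hfil : (Finset.univ.filter (fun p : Fin n => (p : ℕ) < (i : ℕ) + 1))
        = insert i (Finset.univ.filter (fun p : Fin n => (p : ℕ) < (i : ℕ))) := by
      ext p
      simp only [Finset.mem_filter, Finset.mem_univ, true_and, Finset.mem_insert, Fin.ext_iff]
      omega
    have hsupeq : mP π ((i : ℕ) + 1)
        = mP π (i : ℕ) ⊔ MeasurableSpace.comap (Y (π i)) m𝒴 := by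
      rw [hmP]
      dsimp only
      rw [hfil, Finset.iSup_insert]
      exact sup_comm _ _
    have h13 : mP π (i : ℕ) ≤ ⨆ l ∈ ({π i}ᶜ : Set (Fin n)), MeasurableSpace.comap (Y l) m𝒴 := by
      refine iSup₂_le fun j hj => ?_
      have hji : π j ≠ π i := by
        simp only [Finset.mem_filter, Finset.mem_univ, true_and] at hj
        exact fun hc => absurd (π.injective hc) (by intro h; omega)
      exact le_iSup₂ (f := fun l (_ : l ∈ ({π i}ᶜ : Set (Fin n))) =>
        MeasurableSpace.comap (Y l) m𝒴) (π j) hji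
    show μ[gY (π i) | mP π ((i : ℕ) + 1)] =ᵐ[μ] μ[gY (π i) | mP π (i : ℕ)]
    rw [hsupeq]
    exact my_condexp_sup_indep (hm3_le (π i)) ((hmeas (π i)).comap_le) h13
      (hgYmeas3 (π i)) (hgint (π i)) (hIndep3 (π i))
  -- swap identities
  have hswapterm : ∀ (π : Equiv.Perm (Fin n)) (m : ℕ) (i p : Fin n),
      (∀ j : Fin n, (j : ℕ) < m → Equiv.swap i p j ∈
        Finset.univ.filter (fun q : Fin n => (q : ℕ) < m)) →
      u (π * Equiv.swap i p) m i = u π m p := by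
    intro π m i p hmem
    have h1 : (π * Equiv.swap i p) i = π p := by
      simp [Equiv.Perm.mul_apply]
    have h2 : mP (π * Equiv.swap i p) m = mP π m := by
      rw [hmP]
      dsimp only
      have := my_biSup_swap (Equiv.swap i p)
        (Finset.univ.filter (fun q : Fin n => (q : ℕ) < m))
        (fun j hj => hmem j (by simpa using hj)) (fun j => Equiv.swap_apply_self _ _ _)
        (fun l => MeasurableSpace.comap (Y (π l)) m𝒴)
      calc (⨆ j ∈ Finset.univ.filter (fun q : Fin n => (q : ℕ) < m),
            MeasurableSpace.comap (Y ((π * Equiv.swap i p) j)) m𝒴)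
          = ⨆ j ∈ Finset.univ.filter (fun q : Fin n => (q : ℕ) < m),
            MeasurableSpace.comap (Y (π (Equiv.swap i p j))) m𝒴 := rfl
        _ = _ := this
    rw [hu]
    dsimp only
    rw [h1, h2]
  have hsum_reindex : ∀ (i p : Fin n) (m : ℕ),
      (∀ j : Fin n, (j : ℕ) < m → Equiv.swap i p j ∈
        Finset.univ.filter (fun q : Fin n => (q : ℕ) < m)) →
      ∑ π : Equiv.Perm (Fin n), u π m i = ∑ π : Equiv.Perm (Fin n), u π m p := by
    intro i p m hmem
    calc ∑ π : Equiv.Perm (Fin n), u π m i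
        = ∑ π : Equiv.Perm (Fin n), u ((Equiv.mulRight (Equiv.swap i p)) π) m i :=
          (Equiv.sum_comp (Equiv.mulRight (Equiv.swap i p))
            (fun π => u π m i)).symm
      _ = ∑ π : Equiv.Perm (Fin n), u π m p := by
          refine Finset.sum_congr rfl fun π _ => ?_
          have : (Equiv.mulRight (Equiv.swap i p)) π = π * Equiv.swap i p := rfl
          rw [this, hswapterm π m i p hmem]
  -- total sum conditional expectations
  set SG : Ω → ℝ := fun ω => ∑ k, g k (fun j => Y j ω) with hSG
  have hSGeq : SG = ∑ k : Fin n, gY k := by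
    funext ω; simp [hSG, hgY, Finset.sum_apply]
  have hSGint : Integrable SG μ := by
    rw [hSGeq]; exact integrable_finset_sum' _ (fun k _ => hgint k)
  have hWle : ∀ (π : Equiv.Perm (Fin n)) (m : ℕ), μ[SG | mP π m] ≤ᵐ[μ] fun _ => M := by
    intro π m
    have h1 : μ[SG | mP π m] ≤ᵐ[μ] μ[(fun _ => M) | mP π m] :=
      condExp_mono hSGint (integrable_const M) (by filter_upwards [hM] with ω h using h)
    have h2 : μ[(fun _ => M) | mP π m] = fun _ => M := condExp_const (hmP_le π m) M
    rw [h2] at h1; exact h1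
  have hWsum : ∀ (π : Equiv.Perm (Fin n)) (m : ℕ),
      ∑ p : Fin n, u π m p =ᵐ[μ] μ[SG | mP π m] := by
    intro π m
    have h2 : SG = ∑ p : Fin n, gY (π p) := by
      rw [hSGeq]; exact (Equiv.sum_comp π gY).symm
    have h1 : μ[∑ p : Fin n, gY (π p) | mP π m] =ᵐ[μ] ∑ p : Fin n, μ[gY (π p) | mP π m] :=
      condExp_finsetSum (fun p _ => hgint (π p)) (mP π m)
    rw [h2]
    exact h1.symm
  have hae : ∀ᵐ ω ∂μ,
      (∀ (π : Equiv.Perm (Fin n)) (i : Fin n), u π ((i : ℕ) + 1) i ω = u π (i : ℕ) i ω)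
      ∧ (∀ (π : Equiv.Perm (Fin n)) (m : ℕ), ∑ p : Fin n, u π m p ω ≤ M) := by
    rw [Filter.eventually_and]
    constructor
    · rw [MeasureTheory.ae_all_iff]; intro π
      rw [MeasureTheory.ae_all_iff]; intro i
      exact hB π i
    · rw [MeasureTheory.ae_all_iff]; intro π
      rw [MeasureTheory.ae_all_iff]; intro m
      filter_upwards [hWsum π m, hWle π m] with ω h1 h2
      calc ∑ p : Fin n, u π m p ω = (∑ p : Fin n, u π m p) ω := (Finset.sum_apply _ _ _).symm
        _ = (μ[SG | mP π m]) ω := h1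
        _ ≤ M := h2
  -- identify the statement terms
  have hstmt : ∀ (π : Equiv.Perm (Fin n)) (i : Fin n),
      (μ[(fun ω' => g (π i) (fun j => Y j ω')) |
        ⨆ j ∈ Finset.univ.filter (fun j : Fin n => j < i),
          MeasurableSpace.comap (Y (π j)) m𝒴]) = u π (i : ℕ) i := by
    intro π i
    have hfil : (Finset.univ.filter (fun j : Fin n => j < i))
        = Finset.univ.filter (fun p : Fin n => (p : ℕ) < (i : ℕ)) := by
      apply Finset.filter_congr; intro p _; exact Fin.lt_def
    rw [hu]
    dsimp only
    rw [hmP]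
    dsimp only
    rw [hfil]
  filter_upwards [hae] with ω hω
  obtain ⟨h1, h2⟩ := hω
  simp only [hstmt]
  have hswA : ∀ i : Fin n, ((n : ℝ) - (i : ℕ)) * (∑ π : Equiv.Perm (Fin n), u π (i : ℕ) i ω)
      = ∑ p ∈ Finset.univ.filter (fun p : Fin n => (i : ℕ) ≤ (p : ℕ)),
          ∑ π : Equiv.Perm (Fin n), u π (i : ℕ) p ω := by
    intro i
    have hterm : ∀ p ∈ Finset.univ.filter (fun p : Fin n => (i : ℕ) ≤ (p : ℕ)),
        ∑ π : Equiv.Perm (Fin n), u π (i : ℕ) p ω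
          = ∑ π : Equiv.Perm (Fin n), u π (i : ℕ) i ω := by
      intro p hp
      have hip : (i : ℕ) ≤ (p : ℕ) := by simpa using hp
      have hmem : ∀ j : Fin n, (j : ℕ) < (i : ℕ) → Equiv.swap i p j ∈
          Finset.univ.filter (fun q : Fin n => (q : ℕ) < (i : ℕ)) := by
        intro j hj
        have hji : j ≠ i := by intro h; rw [h] at hj; omega
        have hjp : j ≠ p := by intro h; rw [h] at hj; omega
        rw [Equiv.swap_apply_of_ne_of_ne hji hjp]
        simpa using hj
      have hfun := hsum_reindex i p (i : ℕ) hmem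
      have := congrFun hfun ω
      rw [Finset.sum_apply, Finset.sum_apply] at this
      exact this.symm
    rw [Finset.sum_congr rfl hterm, Finset.sum_const,
      my_card_filter_ge n (i : ℕ) (le_of_lt i.isLt), nsmul_eq_mul]
    rw [Nat.cast_sub (le_of_lt i.isLt)]
  have hswB : ∀ i : Fin n, (((i : ℕ) : ℝ) + 1) * (∑ π : Equiv.Perm (Fin n), u π (i : ℕ) i ω)
      = ∑ p ∈ Finset.univ.filter (fun p : Fin n => (p : ℕ) < (i : ℕ) + 1),
          ∑ π : Equiv.Perm (Fin n), u π ((i : ℕ) + 1) p ω := by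
    intro i
    have hterm : ∀ p ∈ Finset.univ.filter (fun p : Fin n => (p : ℕ) < (i : ℕ) + 1),
        ∑ π : Equiv.Perm (Fin n), u π ((i : ℕ) + 1) p ω
          = ∑ π : Equiv.Perm (Fin n), u π (i : ℕ) i ω := by
      intro p hp
      have hpi : (p : ℕ) < (i : ℕ) + 1 := by simpa using hp
      have hmem : ∀ j : Fin n, (j : ℕ) < (i : ℕ) + 1 → Equiv.swap i p j ∈
          Finset.univ.filter (fun q : Fin n => (q : ℕ) < (i : ℕ) + 1) := by
        intro j hj
        rcases eq_or_ne j i with rfl | hji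
        · rw [Equiv.swap_apply_left]; simpa using hpi
        · rcases eq_or_ne j p with rfl | hjp
          · rw [Equiv.swap_apply_right]; simp
          · rw [Equiv.swap_apply_of_ne_of_ne hji hjp]; simpa using hj
      have hfun := hsum_reindex i p ((i : ℕ) + 1) hmem
      have heval := congrFun hfun ω
      rw [Finset.sum_apply, Finset.sum_apply] at heval
      calc ∑ π : Equiv.Perm (Fin n), u π ((i : ℕ) + 1) p ω
          = ∑ π : Equiv.Perm (Fin n), u π ((i : ℕ) + 1) i ω := heval.symm
        _ = ∑ π : Equiv.Perm (Fin n), u π (i : ℕ) i ω :=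
            Finset.sum_congr rfl fun π _ => h1 π i
    rw [Finset.sum_congr rfl hterm, Finset.sum_const,
      my_card_filter_lt n ((i : ℕ) + 1) i.isLt, nsmul_eq_mul]
    push_cast
    ring
  set Φ : ℕ → ℝ := fun j => ∑ p ∈ Finset.univ.filter (fun p : Fin n => j ≤ (p : ℕ)),
    ∑ π : Equiv.Perm (Fin n), u π j p ω with hΦ
  set Ψ : ℕ → ℝ := fun j => ∑ p ∈ Finset.univ.filter (fun p : Fin n => (p : ℕ) < j),
    ∑ π : Equiv.Perm (Fin n), u π j p ω with hΨ
  set S : ℝ := ∑ i : Fin n, ∑ π : Equiv.Perm (Fin n), u π (i : ℕ) i ω with hS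
  have hkey : ((n : ℝ) + 1) * S ≤ ((n : ℝ) + 1) * ((n.factorial : ℝ) * M) := by
    have expand : ((n : ℝ) + 1) * S = ∑ i : Fin n, (Φ (i : ℕ) + Ψ ((i : ℕ) + 1)) := by
      rw [hS, Finset.mul_sum]
      refine Finset.sum_congr rfl fun i _ => ?_
      rw [hΦ, hΨ]
      dsimp only
      rw [← hswA i, ← hswB i]
      ring
    have hΦn : Φ n = 0 := by
      have hemp : Finset.univ.filter (fun p : Fin n => n ≤ (p : ℕ)) = ∅ := by
        ext p
        simp only [Finset.mem_filter, Finset.mem_univ, true_and, Finset.notMem_empty,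
          iff_false, not_le]
        exact p.isLt
      rw [hΦ]; dsimp only; rw [hemp, Finset.sum_empty]
    have hΨ0 : Ψ 0 = 0 := by
      have hemp : Finset.univ.filter (fun p : Fin n => (p : ℕ) < 0) = ∅ := by
        ext p; simp
      rw [hΨ]; dsimp only; rw [hemp, Finset.sum_empty]
    have hcollect : ∑ i : Fin n, (Φ (i : ℕ) + Ψ ((i : ℕ) + 1))
        = ∑ j ∈ Finset.range (n + 1), (Φ j + Ψ j) := by
      rw [Finset.sum_add_distrib, Finset.sum_add_distrib]
      congr 1
      · rw [Fin.sum_univ_eq_sum_range (fun j => Φ j) n, Finset.sum_range_succ, hΦn, add_zero]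
      · rw [Fin.sum_univ_eq_sum_range (fun j => Ψ (j + 1)) n, Finset.sum_range_succ', hΨ0,
          add_zero]
    have hbound : ∀ j ∈ Finset.range (n + 1), Φ j + Ψ j ≤ (n.factorial : ℝ) * M := by
      intro j _
      have hfn : Finset.univ.filter (fun p : Fin n => (p : ℕ) < j)
          = Finset.univ.filter (fun p : Fin n => ¬ (j ≤ (p : ℕ))) := by
        apply Finset.filter_congr; intro p _; simp [not_le]
      have hsplit : Φ j + Ψ j = ∑ p : Fin n, ∑ π : Equiv.Perm (Fin n), u π j p ω := by
        rw [hΦ, hΨ]; dsimp only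
        rw [hfn]
        exact Finset.sum_filter_add_sum_filter_not _ _ _
      rw [hsplit, Finset.sum_comm]
      calc ∑ π : Equiv.Perm (Fin n), ∑ p : Fin n, u π j p ω
          ≤ ∑ π : Equiv.Perm (Fin n), M := Finset.sum_le_sum (fun π _ => h2 π j)
        _ = (n.factorial : ℝ) * M := by
            rw [Finset.sum_const, Finset.card_univ, Fintype.card_perm, Fintype.card_fin,
              nsmul_eq_mul]
    calc ((n : ℝ) + 1) * S = ∑ j ∈ Finset.range (n + 1), (Φ j + Ψ j) := by
          rw [expand, hcollect]
      _ ≤ ∑ _j ∈ Finset.range (n + 1), (n.factorial : ℝ) * M := Finset.sum_le_sum hbound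
      _ = ((n : ℝ) + 1) * ((n.factorial : ℝ) * M) := by
          rw [Finset.sum_const, Finset.card_range, nsmul_eq_mul]
          push_cast
          ring
  have hSle : S ≤ (n.factorial : ℝ) * M := le_of_mul_le_mul_left hkey (by positivity)
  have hfacpos : (0 : ℝ) < (n.factorial : ℝ) := by
    exact_mod_cast Nat.factorial_pos n
  have hnpos : (0 : ℝ) < n := by exact_mod_cast hn
  have hgoal1 : ∑ π : Equiv.Perm (Fin n), ∑ i : Fin n, u π (i : ℕ) i ω = S := by
    rw [hS]; exact Finset.sum_comm
  rw [hgoal1]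
  calc (1 / (n.factorial : ℝ)) * S ≤ (1 / (n.factorial : ℝ)) * ((n.factorial : ℝ) * M) :=
        mul_le_mul_of_nonneg_left hSle (by positivity)
    _ = M := by field_simp
    _ ≤ ((n : ℝ) + 1) / n * M := by
        refine le_mul_of_one_le_left hM0 ?_
        rw [le_div_iff₀ hnpos]
        linarith
end
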